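/- Let v₃ > 0 and 0 < λ < v₃/2, and let (y, z, θ) solve y' = cos θ, z' = sin θ, θ' = 2λ + v₃ cos θ with θ(0) = π and θ nonconstant. Set θ₁ = arccos(−2λ/v₃) ∈ (π/2, π). Then θ(s) ∈ (θ₁, 2π − θ₁) for all s, θ is strictly decreasing, cos θ(s) < 0 for all s, so y is strictly decreasing, the curve is a graph z = z(y), and this graph is convex: z''(y) = θ'(s)/cos³θ(s) > 0. -/

import Mathlib

/-!
The equation `θ' = 2λ + v₃ cos θ` is autonomous with Lipschitz right-hand side, so its zeros
`θ₁` and `2π - θ₁` are equilibria that the solution through `θ 0 = π` can never reach; by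
continuity `θ` stays in the arc `(θ₁, 2π - θ₁)`, where both `θ'` and `cos θ` are negative.
By Cauchy's mean value theorem every chord of the curve `(y, z)` has slope `tan θ(ξ)` at an
interior parameter `ξ`; since `tan` increases on `(π/2, 3π/2)` while `θ` and `y` decrease, the
chord slopes increase with `y`, which is strict convexity of the graph.
-/

open Real Set

theorem lipschitzWith_const_add_mul_cos (a c : ℝ) :
    LipschitzWith ‖c‖₊ (fun x => a + c * cos x) := by
  simpa using (LipschitzWith.const a).add ((lipschitzWith_smul c).comp lipschitzWith_cos)

theorem eq_const_of_hasDerivAt_of_apply_eq_zero {E : Type*} [NormedAddCommGroup E]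
    [NormedSpace ℝ E] {f : E → E} {K : NNReal} {x : ℝ → E} {w : E} {t₀ : ℝ}
    (hf : LipschitzWith K f) (hx : ∀ t, HasDerivAt x (f (x t)) t) (hw : f w = 0)
    (ht₀ : x t₀ = w) : x = fun _ => w :=
  ODE_solution_unique_univ (v := fun _ => f) (s := fun _ => univ) (fun _ => hf.lipschitzOnWith)
    (fun t => ⟨hx t, trivial⟩) (fun t => ⟨by simpa [hw] using hasDerivAt_const t w, trivial⟩) ht₀

theorem Continuous.forall_mem_Ioo_of_forall_ne {α β : Type*} [TopologicalSpace α]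
    [PreconnectedSpace α] [LinearOrder β] [TopologicalSpace β] [OrderClosedTopology β]
    {f : α → β} (hf : Continuous f) {a b : β} {x₀ : α} (h₀ : f x₀ ∈ Ioo a b)
    (ha : ∀ x, f x ≠ a) (hb : ∀ x, f x ≠ b) (x : α) : f x ∈ Ioo a b := by
  have hconn := (isPreconnected_range hf).ordConnected
  by_contra hx
  rcases not_and_or.mp hx with hxa | hxb
  · obtain ⟨x', hx'⟩ := hconn.out (mem_range_self x) (mem_range_self x₀)
      ⟨not_lt.mp hxa, h₀.1.le⟩
    exact ha x' hx'
  · obtain ⟨x', hx'⟩ := hconn.out (mem_range_self x₀) (mem_range_self x)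
      ⟨h₀.2.le, not_lt.mp hxb⟩
    exact hb x' hx'

namespace Real

theorem cos_lt_cos_of_mem_Ioo_two_pi_sub {φ x : ℝ} (hφ : 0 ≤ φ) (hx : x ∈ Ioo φ (2 * π - φ)) :
    cos x < cos φ := by
  rcases le_or_gt x π with hxπ | hπx
  · exact cos_lt_cos_of_nonneg_of_le_pi hφ hxπ hx.1
  · rw [← cos_two_pi_sub x]
    exact cos_lt_cos_of_nonneg_of_le_pi hφ (by linarith) (by linarith [hx.2])

theorem strictMonoOn_tan_Ioo_pi_div_two : StrictMonoOn tan (Ioo (π / 2) (3 * π / 2)) := by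
  intro a ha b hb hab
  rw [← tan_sub_pi a, ← tan_sub_pi b]
  exact strictMonoOn_tan ⟨by linarith [ha.1], by linarith [ha.2]⟩
    ⟨by linarith [hb.1], by linarith [hb.2]⟩ (by linarith)

end Real

theorem exists_strictConvexOn_range_of_slope_lt {y z : ℝ → ℝ} (hy : Continuous y)
    (hanti : StrictAnti y)
    (hslope : ∀ a b c, a < b → b < c →
      (z c - z b) / (y c - y b) < (z b - z a) / (y b - y a)) :
    ∃ g : ℝ → ℝ, (∀ s, z s = g (y s)) ∧ StrictConvexOn ℝ (range y) g := by
  have hz : ∀ s, z s = (z ∘ Function.invFun y) (y s) := fun s => by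
    rw [Function.comp_apply, Function.leftInverse_invFun hanti.injective s]
  have hconn := (isPreconnected_range hy).ordConnected
  refine ⟨_, hz, strictConvexOn_of_slope_strict_mono_adjacent hconn.convex ?_⟩
  rintro _ _ q ⟨c, rfl⟩ ⟨a, rfl⟩ hpq hqr
  obtain ⟨b, rfl⟩ := hconn.out (mem_range_self c) (mem_range_self a) ⟨hpq.le, hqr.le⟩
  simp only [← hz]
  rw [← neg_div_neg_eq (z b - z c), ← neg_div_neg_eq (z a - z b)]
  simp only [neg_sub]
  exact hslope a b c (hanti.lt_iff_gt.mp hqr) (hanti.lt_iff_gt.mp hpq)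

theorem exists_div_sub_eq_tan {y z θ : ℝ → ℝ} (hy : ∀ s, HasDerivAt y (cos (θ s)) s)
    (hz : ∀ s, HasDerivAt z (sin (θ s)) s) (hcos : ∀ s, cos (θ s) ≠ 0) (hyinj : y.Injective)
    {a b : ℝ} (hab : a < b) :
    ∃ ξ ∈ Ioo a b, (z b - z a) / (y b - y a) = tan (θ ξ) := by
  obtain ⟨ξ, hξ, heq⟩ := exists_ratio_hasDerivAt_eq_ratio_slope z (fun s => sin (θ s)) hab
    (fun s _ => (hz s).continuousAt.continuousWithinAt) (fun s _ => hz s)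
    y (fun s => cos (θ s)) (fun s _ => (hy s).continuousAt.continuousWithinAt) (fun s _ => hy s)
  have hyab : y b - y a ≠ 0 := sub_ne_zero.mpr (hyinj.ne hab.ne')
  refine ⟨ξ, hξ, ?_⟩
  rw [tan_eq_sin_div_cos, div_eq_div_iff hyab (hcos ξ)]
  linear_combination -heq

theorem exists_strictConvexOn_of_angle_strictAnti {y z θ : ℝ → ℝ}
    (hy : ∀ s, HasDerivAt y (cos (θ s)) s) (hz : ∀ s, HasDerivAt z (sin (θ s)) s)
    (hθ : StrictAnti θ) (hθmem : ∀ s, θ s ∈ Ioo (π / 2) (3 * π / 2)) :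
    ∃ g : ℝ → ℝ, (∀ s, z s = g (y s)) ∧ StrictConvexOn ℝ (range y) g := by
  have hcos : ∀ s, cos (θ s) < 0 := fun s =>
    cos_neg_of_pi_div_two_lt_of_lt (hθmem s).1 (by linarith [(hθmem s).2])
  have hanti : StrictAnti y := strictAnti_of_hasDerivAt_neg hy hcos
  refine exists_strictConvexOn_range_of_slope_lt
    (continuous_iff_continuousAt.mpr fun s => (hy s).continuousAt) hanti ?_
  intro a b c hab hbc
  obtain ⟨ξ₁, hξ₁, h₁⟩ := exists_div_sub_eq_tan hy hz (fun s => (hcos s).ne) hanti.injective hab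
  obtain ⟨ξ₂, hξ₂, h₂⟩ := exists_div_sub_eq_tan hy hz (fun s => (hcos s).ne) hanti.injective hbc
  rw [h₁, h₂]
  exact strictMonoOn_tan_Ioo_pi_div_two (hθmem ξ₂) (hθmem ξ₁) (hθ (hξ₁.2.trans hξ₂.1))

theorem stmt8_general (lam v₃ : ℝ) (hv : 0 < v₃) (hlam0 : 0 < lam) (hlam : lam < v₃ / 2)
    (y z θ : ℝ → ℝ)
    (hy : ∀ s, HasDerivAt y (Real.cos (θ s)) s)
    (hz : ∀ s, HasDerivAt z (Real.sin (θ s)) s)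
    (hθ : ∀ s, HasDerivAt θ (2*lam + v₃ * Real.cos (θ s)) s)
    (hθ0 : θ 0 = Real.pi)
    (θ₁ : ℝ) (hθ₁ : θ₁ = Real.arccos (-(2*lam)/v₃)) :
    (Real.pi/2 < θ₁ ∧ θ₁ < Real.pi) ∧
    (∀ s, θ₁ < θ s ∧ θ s < 2*Real.pi - θ₁) ∧
    StrictAnti θ ∧
    (∀ s, Real.cos (θ s) < 0) ∧
    StrictAnti y ∧
    (∀ s, 0 < (2*lam + v₃ * Real.cos (θ s)) / (Real.cos (θ s))^3) ∧
    (∃ g : ℝ → ℝ, (∀ s, z s = g (y s)) ∧ StrictConvexOn ℝ (Set.range y) g) := by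
  set c := -(2 * lam) / v₃ with hc
  have hc0 : c < 0 := div_neg_of_neg_of_pos (by linarith) hv
  have hc1 : -1 < c := by rw [hc, lt_div_iff₀ hv]; linarith
  have hcosθ₁ : cos θ₁ = c := hθ₁ ▸ cos_arccos hc1.le (by linarith)
  have hθ₁mem : π / 2 < θ₁ ∧ θ₁ < π := by
    rw [hθ₁]; exact ⟨not_le.mp (mt arccos_le_pi_div_two.mp hc0.not_ge), arccos_lt_pi.mpr hc1⟩
  have hequil : ∀ w, 2 * lam + v₃ * cos w = 0 → w ≠ π → ∀ s, θ s ≠ w := fun w hw hwπ s hs =>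
    hwπ <| by rw [← hθ0, eq_const_of_hasDerivAt_of_apply_eq_zero
      (lipschitzWith_const_add_mul_cos (2 * lam) v₃) hθ hw hs]
  have hzero : 2 * lam + v₃ * cos θ₁ = 0 := by rw [hcosθ₁, hc]; field_simp; ring
  have hbounds : ∀ s, θ s ∈ Ioo θ₁ (2 * π - θ₁) :=
    (continuous_iff_continuousAt.mpr fun s => (hθ s).continuousAt).forall_mem_Ioo_of_forall_ne
      (x₀ := 0) (by rw [hθ0]; constructor <;> linarith) (hequil θ₁ hzero hθ₁mem.2.ne)
      (hequil _ (by rwa [cos_two_pi_sub]) (by linarith))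
  have hcos : ∀ s, cos (θ s) < c := fun s =>
    hcosθ₁ ▸ cos_lt_cos_of_mem_Ioo_two_pi_sub (by linarith) (hbounds s)
  have hθ' : ∀ s, 2 * lam + v₃ * cos (θ s) < 0 := fun s => by
    have := mul_lt_mul_of_pos_left (hcos s) hv
    rw [hc, mul_div_cancel₀ _ hv.ne'] at this
    linarith
  have hcos_neg : ∀ s, cos (θ s) < 0 := fun s => (hcos s).trans hc0
  have hθanti : StrictAnti θ := strictAnti_of_hasDerivAt_neg hθ hθ'
  refine ⟨hθ₁mem, hbounds, hθanti, hcos_neg, strictAnti_of_hasDerivAt_neg hy hcos_neg,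
    fun s => div_pos_of_neg_of_neg (hθ' s) (Odd.pow_neg (by decide) (hcos_neg s)),
    exists_strictConvexOn_of_angle_strictAnti hy hz hθanti fun s => ⟨?_, ?_⟩⟩
  · linarith [(hbounds s).1]
  · linarith [(hbounds s).2]

/-- Case `0 < λ < v₃/2` of the generating-curve system, with `θ 0 = π` and `θ`
nonconstant.  With `θ₁ = arccos(-2λ/v₃) ∈ (π/2, π)`, the angle satisfies
`θ₁ < θ(s) < 2π - θ₁` for all `s`, `θ` is strictly decreasing, `cos θ < 0`
everywhere (so `y` is strictly decreasing), the curve is a graph `z = g(y)`,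
and this graph is strictly convex; moreover `θ'/cos³θ > 0`. -/
theorem stmt8 (lam v₃ : ℝ) (hv : 0 < v₃) (hlam0 : 0 < lam) (hlam : lam < v₃ / 2)
    (y z θ : ℝ → ℝ)
    (hy : ∀ s, HasDerivAt y (Real.cos (θ s)) s)
    (hz : ∀ s, HasDerivAt z (Real.sin (θ s)) s)
    (hθ : ∀ s, HasDerivAt θ (2*lam + v₃ * Real.cos (θ s)) s)
    (hy0 : y 0 = 0) (hz0 : z 0 = 0) (hθ0 : θ 0 = Real.pi)
    (hnc : ∃ s, θ s ≠ Real.pi)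
    (θ₁ : ℝ) (hθ₁ : θ₁ = Real.arccos (-(2*lam)/v₃)) :
    (Real.pi/2 < θ₁ ∧ θ₁ < Real.pi) ∧
    (∀ s, θ₁ < θ s ∧ θ s < 2*Real.pi - θ₁) ∧
    StrictAnti θ ∧
    (∀ s, Real.cos (θ s) < 0) ∧
    StrictAnti y ∧
    (∀ s, 0 < (2*lam + v₃ * Real.cos (θ s)) / (Real.cos (θ s))^3) ∧
    (∃ g : ℝ → ℝ, (∀ s, z s = g (y s)) ∧ StrictConvexOn ℝ (Set.range y) g) :=
  stmt8_general lam v₃ hv hlam0 hlam y z θ hy hz hθ hθ0 θ₁ hθ₁
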